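/- Let w be a word of length n ≥ 2 such that each letter appears at most k times in w. Then f(w) ≤ max{4k, n} + 2. -/

import Mathlib

namespace WordGrid

variable {α : Type*}

/-- The `i`-th row of the grid `G` contains the word `w` (forwards or backwards). -/
def rowC {n : ℕ} (w : Fin n → α) (G : Fin n → Fin n → α) (i : Fin n) : Prop :=
  (∀ j, G i j = w j) ∨ (∀ j, G i j = w j.rev)

/-- The `i`-th column of the grid `G` contains the word `w` (forwards or backwards). -/
def colC {n : ℕ} (w : Fin n → α) (G : Fin n → Fin n → α) (i : Fin n) : Prop :=
  (∀ j, G j i = w j) ∨ (∀ j, G j i = w j.rev)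

/-- The main diagonal of the grid `G` contains the word `w`. -/
def diagC {n : ℕ} (w : Fin n → α) (G : Fin n → Fin n → α) : Prop :=
  (∀ j, G j j = w j) ∨ (∀ j, G j j = w j.rev)

/-- The anti-diagonal of the grid `G` contains the word `w`. -/
def adiagC {n : ℕ} (w : Fin n → α) (G : Fin n → Fin n → α) : Prop :=
  (∀ j, G j j.rev = w j) ∨ (∀ j, G j j.rev = w j.rev)

open Classical in
/-- `f(w,G)`: the number of rows, columns and diagonals of `G` containing `w`. -/
noncomputable def count {n : ℕ} (w : Fin n → α) (G : Fin n → Fin n → α) : ℕ :=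
  {i | rowC w G i}.ncard + {i | colC w G i}.ncard
    + (if diagC w G then 1 else 0) + (if adiagC w G then 1 else 0)

/-- `f(w)`: the maximum of `f(w,G)` over all `n`-grids `G`. -/
noncomputable def fword {n : ℕ} (w : Fin n → α) : ℕ :=
  sSup {m | ∃ G : Fin n → Fin n → α, count w G = m}

/-! If some row and some column both contain `w`, every column containing `w` meets that row in
a cell holding `w j` or `w j.rev` for one fixed `j`, so there are at most `2k` such columns, and
symmetrically at most `2k` such rows. Otherwise rows or columns contribute nothing, and the other
family contributes at most `n`. The two diagonals add at most `2`. -/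

lemma ncard_setOf_comp_rev_eq {n : ℕ} (w : Fin n → α) (a : α) :
    {i : Fin n | w i.rev = a}.ncard = {i | w i = a}.ncard :=
  Set.ncard_preimage_of_injective_subset_range (s := {i | w i = a}) Fin.rev_injective
    (by simp [Fin.rev_surjective.range_eq])

lemma ncard_setOf_row_eq_le_of_rowC {n k : ℕ} {w : Fin n → α} {G : Fin n → Fin n → α}
    (h : ∀ a : α, {i | w i = a}.ncard ≤ k) {i : Fin n} (hi : rowC w G i) (a : α) :
    {j | G i j = a}.ncard ≤ k := by
  rcases hi with hrow | hrow <;> simp only [hrow]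
  · exact h a
  · exact (ncard_setOf_comp_rev_eq w a).le.trans (h a)

lemma ncard_setOf_colC_le_of_rowC {n k : ℕ} {w : Fin n → α} {G : Fin n → Fin n → α}
    (h : ∀ a : α, {i | w i = a}.ncard ≤ k) {i : Fin n} (hi : rowC w G i) :
    {j | colC w G j}.ncard ≤ 2 * k := by
  have hsub : {j | colC w G j} ⊆ {j | G i j = w i} ∪ {j | G i j = w i.rev} := by
    rintro j (hcol | hcol)
    exacts [Or.inl (hcol i), Or.inr (hcol i)]
  calc {j | colC w G j}.ncard
      ≤ ({j | G i j = w i} ∪ {j | G i j = w i.rev}).ncard := Set.ncard_le_ncard hsub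
    _ ≤ {j | G i j = w i}.ncard + {j | G i j = w i.rev}.ncard := Set.ncard_union_le _ _
    _ ≤ 2 * k := by
      have := ncard_setOf_row_eq_le_of_rowC h hi (w i)
      have := ncard_setOf_row_eq_le_of_rowC h hi (w i.rev)
      omega

lemma ncard_le_of_fin {n : ℕ} (s : Set (Fin n)) : s.ncard ≤ n :=
  (Set.ncard_le_card s).trans_eq (Nat.card_fin n)

lemma ncard_rowC_add_ncard_colC_le {n k : ℕ} (w : Fin n → α) (G : Fin n → Fin n → α)
    (h : ∀ a : α, {i | w i = a}.ncard ≤ k) :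
    {i | rowC w G i}.ncard + {i | colC w G i}.ncard ≤ max (4 * k) n := by
  rcases Set.eq_empty_or_nonempty {i | rowC w G i} with hrows | ⟨i, hi⟩
  · simpa [hrows] using (ncard_le_of_fin _).trans (le_max_right (4 * k) n)
  rcases Set.eq_empty_or_nonempty {j | colC w G j} with hcols | ⟨j, hj⟩
  · simpa [hcols] using (ncard_le_of_fin _).trans (le_max_right (4 * k) n)
  have hcols := ncard_setOf_colC_le_of_rowC h hi
  have hrows := ncard_setOf_colC_le_of_rowC (G := Function.swap G) h hj
  change {i | rowC w G i}.ncard ≤ 2 * k at hrows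
  omega

lemma count_le {n k : ℕ} (w : Fin n → α) (G : Fin n → Fin n → α)
    (h : ∀ a : α, {i | w i = a}.ncard ≤ k) :
    count w G ≤ max (4 * k) n + 2 := by
  classical
  have hlines := ncard_rowC_add_ncard_colC_le w G h
  have hdiag : (if diagC w G then 1 else 0) ≤ 1 := by split <;> omega
  have hadiag : (if adiagC w G then 1 else 0) ≤ 1 := by split <;> omega
  unfold count
  omega

theorem fword_upper_few_general {n k : ℕ} (w : Fin n → α)
    (h : ∀ a : α, {i | w i = a}.ncard ≤ k) :
    fword w ≤ max (4 * k) n + 2 := by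
  refine csSup_le ⟨_, fun _ => w, rfl⟩ ?_
  rintro m ⟨G, rfl⟩
  exact count_le w G h

theorem fword_upper_few {n k : ℕ} (hn : 2 ≤ n) (w : Fin n → α)
    (h : ∀ a : α, {i | w i = a}.ncard ≤ k) :
    fword w ≤ max (4 * k) n + 2 :=
  fword_upper_few_general w h

end WordGrid
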